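/- Let S and A be nonempty finite sets, let γ ∈ [0,1), let π : S → PMF(A) be a policy, and let ρ⁰ ∈ PMF(S). Let M₁ and M₂ be two nonempty sets of models, where a model m is a pair (P, r) of a transition kernel P : S → A → PMF(S) and a reward function r : S × A → [0,1], and let J(π, m) denote the expected discounted return of π under model m starting from ρ⁰. Suppose L_P, L_r ≥ 0 are such that: for every m₁ = (P₁, r₁) ∈ M₁ there exists m₂ = (P₂, r₂) ∈ M₂ with Σ_{s'} |P₁(s,a)(s') − P₂(s,a)(s')| ≤ L_P and |r₁(s,a) − r₂(s,a)| ≤ L_r for all (s,a), and symmetrically for every m₂ ∈ M₂ there exists such an m₁ ∈ M₁. Then |inf_{m ∈ M₁} J(π, m) − inf_{m ∈ M₂} J(π, m)| ≤ L_r/(1−γ) + γ·L_P/(1−γ)². -/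

import Mathlib

noncomputable section

/-- Policy-mixed one-step state-to-state kernel: `K^π(s'|s) = ∑_a π(s)(a) · K(s,a)(s')`. -/
def kerPi {S A : Type*} [Fintype A] (π : S → PMF A) (K : S → A → PMF S)
    (s s' : S) : ℝ :=
  ∑ a : A, ((π s) a).toReal * ((K s a) s').toReal

/-- State distribution at time step `k` under policy `π`, kernel `K` and initial
distribution `ρ`: `μ₀ = ρ`, `μ_{k+1}(s') = ∑_s μ_k(s) · ∑_a π(s)(a) · K(s,a)(s')`. -/
def stateDist {S A : Type*} [Fintype S] [Fintype A] (π : S → PMF A)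
    (K : S → A → PMF S) (ρ : PMF S) : ℕ → S → ℝ
  | 0 => fun s => (ρ s).toReal
  | (k + 1) => fun s' => ∑ s : S, stateDist π K ρ k s * kerPi π K s s'

/-- Discounted state occupancy measure `d^π(s) = (1-γ) ∑_{k≥0} γ^k μ_k(s)`. -/
def occ {S A : Type*} [Fintype S] [Fintype A] (γ : ℝ) (π : S → PMF A)
    (K : S → A → PMF S) (ρ : PMF S) (s : S) : ℝ :=
  (1 - γ) * ∑' k : ℕ, γ ^ k * stateDist π K ρ k s

/-- Expected discounted return
`J(π, K, r) = ∑_{k≥0} γ^k ∑_s μ_k(s) ∑_a π(s)(a) r(s,a)`. -/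
def ret {S A : Type*} [Fintype S] [Fintype A] (γ : ℝ) (π : S → PMF A)
    (K : S → A → PMF S) (ρ : PMF S) (r : S × A → ℝ) : ℝ :=
  ∑' k : ℕ, γ ^ k * ∑ s : S, stateDist π K ρ k s * ∑ a : A, ((π s) a).toReal * r (s, a)

/-- A model of a finite MDP: a transition kernel together with a reward function. -/
abbrev Model (S A : Type*) [Fintype S] : Type _ := (S → A → PMF S) × (S × A → ℝ)

/-!
The return is the discounted sum of the per-step expected rewards `⟨μ_k, R⟩`, where `μ_k` is
the state distribution at step `k` and `R` the policy-averaged reward. One step of two kernels at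
ℓ₁-distance `L_P` moves a probability vector by at most `L_P` in ℓ₁, so `‖μ¹_k - μ²_k‖₁ ≤ k L_P`;
since rewards lie in `[0,1]`, the per-step rewards differ by at most `L_r + k L_P`, and summing
against `γ^k` gives `L_r/(1-γ) + γ L_P/(1-γ)²` for paired models. The mutual closeness of the two
uncertainty sets transfers this bound to their infima.
-/

open Finset

section WeightedSums

variable {ι κ : Type*} [Fintype ι] [Fintype κ]

theorem PMF.sum_toReal_eq_one (p : PMF ι) : ∑ i, (p i).toReal = 1 := by
  have h := p.tsum_coe
  rw [tsum_fintype] at h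
  rw [← ENNReal.toReal_sum fun i _ => p.apply_ne_top i, h, ENNReal.toReal_one]

theorem sum_mul_le_of_sum_eq_one {w f : ι → ℝ} {c : ℝ} (hw : ∀ i, 0 ≤ w i)
    (hw1 : ∑ i, w i = 1) (hf : ∀ i, f i ≤ c) : ∑ i, w i * f i ≤ c :=
  calc ∑ i, w i * f i ≤ ∑ i, w i * c :=
        sum_le_sum fun i _ => mul_le_mul_of_nonneg_left (hf i) (hw i)
    _ = c := by rw [← sum_mul, hw1, one_mul]

theorem abs_sum_mul_sub_sum_mul_le {μ ν f g : ι → ℝ} (hμ : ∀ i, 0 ≤ μ i) :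
    |∑ i, μ i * f i - ∑ i, ν i * g i| ≤
      ∑ i, μ i * |f i - g i| + ∑ i, |μ i - ν i| * |g i| := by
  have hsplit : ∑ i, μ i * f i - ∑ i, ν i * g i =
      ∑ i, μ i * (f i - g i) + ∑ i, (μ i - ν i) * g i := by
    simp only [mul_sub, sub_mul, sum_sub_distrib]
    ring
  rw [hsplit]
  refine (abs_add_le _ _).trans (add_le_add ?_ ?_) <;>
    refine (abs_sum_le_sum_abs _ _).trans_eq (sum_congr rfl fun i _ => ?_)
  · rw [abs_mul, abs_of_nonneg (hμ i)]
  · rw [abs_mul]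

theorem sum_abs_sum_mul_sub_sum_mul_le {μ ν : ι → ℝ} {P Q : ι → κ → ℝ} (hμ : ∀ i, 0 ≤ μ i) :
    ∑ j, |∑ i, μ i * P i j - ∑ i, ν i * Q i j| ≤
      ∑ i, μ i * ∑ j, |P i j - Q i j| + ∑ i, |μ i - ν i| * ∑ j, |Q i j| :=
  calc _ ≤ ∑ j, (∑ i, μ i * |P i j - Q i j| + ∑ i, |μ i - ν i| * |Q i j|) :=
        sum_le_sum fun j _ => abs_sum_mul_sub_sum_mul_le hμ
    _ = _ := by
        simp only [sum_add_distrib, mul_sum]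
        exact congrArg₂ _ sum_comm sum_comm

end WeightedSums

section MDP

variable {S A : Type*} [Fintype A]

def rewardPi (π : S → PMF A) (r : S × A → ℝ) (s : S) : ℝ :=
  ∑ a, (π s a).toReal * r (s, a)

theorem kerPi_nonneg (π : S → PMF A) (K : S → A → PMF S) (s s' : S) : 0 ≤ kerPi π K s s' :=
  sum_nonneg fun _ _ => mul_nonneg ENNReal.toReal_nonneg ENNReal.toReal_nonneg

theorem rewardPi_mem_Icc (π : S → PMF A) {r : S × A → ℝ} (hr : ∀ x, r x ∈ Set.Icc (0 : ℝ) 1)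
    (s : S) : rewardPi π r s ∈ Set.Icc (0 : ℝ) 1 :=
  ⟨sum_nonneg fun a _ => mul_nonneg ENNReal.toReal_nonneg (hr (s, a)).1,
    sum_mul_le_of_sum_eq_one (fun _ => ENNReal.toReal_nonneg) (π s).sum_toReal_eq_one
      fun a => (hr (s, a)).2⟩

theorem abs_rewardPi_sub_le {L_r : ℝ} (π : S → PMF A) {r₁ r₂ : S × A → ℝ}
    (hr : ∀ s a, |r₁ (s, a) - r₂ (s, a)| ≤ L_r) (s : S) :
    |rewardPi π r₁ s - rewardPi π r₂ s| ≤ L_r := by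
  refine (abs_sum_mul_sub_sum_mul_le (fun a => ENNReal.toReal_nonneg (a := π s a))).trans ?_
  simp only [sub_self, abs_zero, zero_mul, sum_const_zero, add_zero]
  exact sum_mul_le_of_sum_eq_one (fun _ => ENNReal.toReal_nonneg) (π s).sum_toReal_eq_one (hr s)

variable [Fintype S]

def stepReward (π : S → PMF A) (K : S → A → PMF S) (ρ : PMF S) (r : S × A → ℝ) (k : ℕ) : ℝ :=
  ∑ s, stateDist π K ρ k s * rewardPi π r s

theorem ret_eq_tsum_stepReward (γ : ℝ) (π : S → PMF A) (K : S → A → PMF S) (ρ : PMF S)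
    (r : S × A → ℝ) : ret γ π K ρ r = ∑' k, γ ^ k * stepReward π K ρ r k :=
  rfl

theorem sum_kerPi (π : S → PMF A) (K : S → A → PMF S) (s : S) : ∑ s', kerPi π K s s' = 1 := by
  simp only [kerPi]
  rw [sum_comm]
  simp only [← mul_sum, PMF.sum_toReal_eq_one, mul_one]

theorem stateDist_nonneg (π : S → PMF A) (K : S → A → PMF S) (ρ : PMF S) (k : ℕ) (s : S) :
    0 ≤ stateDist π K ρ k s := by
  induction k generalizing s with
  | zero => exact ENNReal.toReal_nonneg
  | succ k ih => exact sum_nonneg fun t _ => mul_nonneg (ih t) (kerPi_nonneg π K t s)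

theorem sum_stateDist (π : S → PMF A) (K : S → A → PMF S) (ρ : PMF S) (k : ℕ) :
    ∑ s, stateDist π K ρ k s = 1 := by
  induction k with
  | zero => exact ρ.sum_toReal_eq_one
  | succ k ih =>
    simp only [stateDist]
    rw [sum_comm]
    simp only [← mul_sum, sum_kerPi, mul_one, ih]

theorem sum_abs_kerPi_sub_le {L_P : ℝ} (π : S → PMF A) {K₁ K₂ : S → A → PMF S}
    (hK : ∀ s a, ∑ s', |(K₁ s a s').toReal - (K₂ s a s').toReal| ≤ L_P) (s : S) :
    ∑ s', |kerPi π K₁ s s' - kerPi π K₂ s s'| ≤ L_P := by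
  refine (sum_abs_sum_mul_sub_sum_mul_le (fun a => ENNReal.toReal_nonneg (a := π s a))).trans ?_
  simp only [sub_self, abs_zero, zero_mul, sum_const_zero, add_zero]
  exact sum_mul_le_of_sum_eq_one (fun _ => ENNReal.toReal_nonneg) (π s).sum_toReal_eq_one (hK s)

theorem sum_abs_stateDist_sub_le {L_P : ℝ} (π : S → PMF A) {K₁ K₂ : S → A → PMF S}
    (ρ : PMF S) (hK : ∀ s a, ∑ s', |(K₁ s a s').toReal - (K₂ s a s').toReal| ≤ L_P) (k : ℕ) :
    ∑ s, |stateDist π K₁ ρ k s - stateDist π K₂ ρ k s| ≤ k * L_P := by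
  induction k with
  | zero => simp [stateDist]
  | succ k ih =>
    calc _ ≤ ∑ s, stateDist π K₁ ρ k s * ∑ s', |kerPi π K₁ s s' - kerPi π K₂ s s'| +
            ∑ s, |stateDist π K₁ ρ k s - stateDist π K₂ ρ k s| * ∑ s', |kerPi π K₂ s s'| :=
          sum_abs_sum_mul_sub_sum_mul_le (stateDist_nonneg π K₁ ρ k)
      _ ≤ L_P + k * L_P := by
          refine add_le_add (sum_mul_le_of_sum_eq_one (stateDist_nonneg π K₁ ρ k)
            (sum_stateDist π K₁ ρ k) (sum_abs_kerPi_sub_le π hK)) ?_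
          simpa only [abs_of_nonneg (kerPi_nonneg π K₂ _ _), sum_kerPi, mul_one] using ih
      _ = (k + 1 : ℕ) * L_P := by push_cast; ring

theorem stepReward_mem_Icc (π : S → PMF A) (K : S → A → PMF S) (ρ : PMF S) {r : S × A → ℝ}
    (hr : ∀ x, r x ∈ Set.Icc (0 : ℝ) 1) (k : ℕ) : stepReward π K ρ r k ∈ Set.Icc (0 : ℝ) 1 :=
  ⟨sum_nonneg fun s _ => mul_nonneg (stateDist_nonneg π K ρ k s) (rewardPi_mem_Icc π hr s).1,
    sum_mul_le_of_sum_eq_one (stateDist_nonneg π K ρ k) (sum_stateDist π K ρ k)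
      fun s => (rewardPi_mem_Icc π hr s).2⟩

theorem abs_stepReward_sub_le {L_P L_r : ℝ} (π : S → PMF A) {K₁ K₂ : S → A → PMF S}
    (ρ : PMF S) {r₁ r₂ : S × A → ℝ}
    (hK : ∀ s a, ∑ s', |(K₁ s a s').toReal - (K₂ s a s').toReal| ≤ L_P)
    (hr : ∀ s a, |r₁ (s, a) - r₂ (s, a)| ≤ L_r) (hr₂ : ∀ x, r₂ x ∈ Set.Icc (0 : ℝ) 1) (k : ℕ) :
    |stepReward π K₁ ρ r₁ k - stepReward π K₂ ρ r₂ k| ≤ L_r + k * L_P := by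
  have hR₂ : ∀ s, |rewardPi π r₂ s| ≤ 1 := fun s =>
    (abs_of_nonneg (rewardPi_mem_Icc π hr₂ s).1).trans_le (rewardPi_mem_Icc π hr₂ s).2
  refine (abs_sum_mul_sub_sum_mul_le (stateDist_nonneg π K₁ ρ k)).trans (add_le_add ?_ ?_)
  · exact sum_mul_le_of_sum_eq_one (stateDist_nonneg π K₁ ρ k) (sum_stateDist π K₁ ρ k)
      (abs_rewardPi_sub_le π hr)
  · exact (sum_le_sum fun s _ => mul_le_of_le_one_right (abs_nonneg _) (hR₂ s)).trans
      (sum_abs_stateDist_sub_le π ρ hK k)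

theorem summable_pow_mul_stepReward {γ : ℝ} (hγ0 : 0 ≤ γ) (hγ1 : γ < 1) (π : S → PMF A)
    (K : S → A → PMF S) (ρ : PMF S) {r : S × A → ℝ} (hr : ∀ x, r x ∈ Set.Icc (0 : ℝ) 1) :
    Summable fun k => γ ^ k * stepReward π K ρ r k :=
  (summable_geometric_of_lt_one hγ0 hγ1).of_nonneg_of_le
    (fun k => mul_nonneg (pow_nonneg hγ0 k) (stepReward_mem_Icc π K ρ hr k).1)
    fun k => mul_le_of_le_one_right (pow_nonneg hγ0 k) (stepReward_mem_Icc π K ρ hr k).2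

theorem ret_nonneg {γ : ℝ} (hγ0 : 0 ≤ γ) (π : S → PMF A) (K : S → A → PMF S) (ρ : PMF S)
    {r : S × A → ℝ} (hr : ∀ x, r x ∈ Set.Icc (0 : ℝ) 1) : 0 ≤ ret γ π K ρ r :=
  tsum_nonneg fun k => mul_nonneg (pow_nonneg hγ0 k) (stepReward_mem_Icc π K ρ hr k).1

theorem hasSum_pow_mul_add_natCast_mul {γ : ℝ} (hγ : |γ| < 1) (a b : ℝ) :
    HasSum (fun k : ℕ => γ ^ k * (a + k * b)) (a / (1 - γ) + γ * b / (1 - γ) ^ 2) := by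
  have hgeom := (hasSum_geometric_of_abs_lt_one hγ).mul_left a
  have hlin := (hasSum_coe_mul_geometric_of_norm_lt_one (𝕜 := ℝ) hγ).mul_left b
  rw [show a / (1 - γ) + γ * b / (1 - γ) ^ 2 = a * (1 - γ)⁻¹ + b * (γ / (1 - γ) ^ 2) by ring]
  exact (hgeom.add hlin).congr_fun fun k => by ring

theorem abs_ret_sub_le {γ L_P L_r : ℝ} (hγ0 : 0 ≤ γ) (hγ1 : γ < 1) (π : S → PMF A) (ρ : PMF S)
    {K₁ K₂ : S → A → PMF S} {r₁ r₂ : S × A → ℝ}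
    (hr₁ : ∀ x, r₁ x ∈ Set.Icc (0 : ℝ) 1) (hr₂ : ∀ x, r₂ x ∈ Set.Icc (0 : ℝ) 1)
    (hK : ∀ s a, ∑ s', |(K₁ s a s').toReal - (K₂ s a s').toReal| ≤ L_P)
    (hr : ∀ s a, |r₁ (s, a) - r₂ (s, a)| ≤ L_r) :
    |ret γ π K₁ ρ r₁ - ret γ π K₂ ρ r₂| ≤ L_r / (1 - γ) + γ * L_P / (1 - γ) ^ 2 := by
  rw [ret_eq_tsum_stepReward, ret_eq_tsum_stepReward,
    ← (summable_pow_mul_stepReward hγ0 hγ1 π K₁ ρ hr₁).tsum_sub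
      (summable_pow_mul_stepReward hγ0 hγ1 π K₂ ρ hr₂), ← Real.norm_eq_abs]
  refine tsum_of_norm_bounded (hasSum_pow_mul_add_natCast_mul
    (abs_lt.2 ⟨by linarith, hγ1⟩) L_r L_P) fun k => ?_
  rw [Real.norm_eq_abs, ← mul_sub, abs_mul, abs_of_nonneg (pow_nonneg hγ0 k)]
  exact mul_le_mul_of_nonneg_left (abs_stepReward_sub_le π ρ hK hr hr₂ k) (pow_nonneg hγ0 k)

end MDP

theorem csInf_image_le_csInf_image_add {α : Type*} {F : α → ℝ} {s t : Set α} {c : ℝ}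
    (hs : BddBelow (F '' s)) (ht : t.Nonempty) (h : ∀ y ∈ t, ∃ x ∈ s, F x ≤ F y + c) :
    sInf (F '' s) ≤ sInf (F '' t) + c := by
  rw [← sub_le_iff_le_add]
  refine le_csInf (ht.image F) (Set.forall_mem_image.2 fun y hy => ?_)
  obtain ⟨x, hx, hxy⟩ := h y hy
  linarith [csInf_le hs (Set.mem_image_of_mem F hx)]

theorem robust_obj_abs_sub_le_general {S A : Type*} [Fintype S] [Fintype A]
    (γ : ℝ) (hγ0 : 0 ≤ γ) (hγ1 : γ < 1)
    (π : S → PMF A) (ρ : PMF S)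
    (M₁ M₂ : Set (Model S A)) (hM₁ : M₁.Nonempty) (hM₂ : M₂.Nonempty)
    (hrew : ∀ m ∈ M₁ ∪ M₂, ∀ x, m.2 x ∈ Set.Icc (0 : ℝ) 1)
    (L_P L_r : ℝ)
    (h12 : ∀ m₁ ∈ M₁, ∃ m₂ ∈ M₂,
      (∀ s : S, ∀ a : A, ∑ s' : S, |((m₁.1 s a) s').toReal - ((m₂.1 s a) s').toReal| ≤ L_P) ∧
      ∀ s : S, ∀ a : A, |m₁.2 (s, a) - m₂.2 (s, a)| ≤ L_r)
    (h21 : ∀ m₂ ∈ M₂, ∃ m₁ ∈ M₁,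
      (∀ s : S, ∀ a : A, ∑ s' : S, |((m₁.1 s a) s').toReal - ((m₂.1 s a) s').toReal| ≤ L_P) ∧
      ∀ s : S, ∀ a : A, |m₁.2 (s, a) - m₂.2 (s, a)| ≤ L_r) :
    |sInf ((fun m : Model S A => ret γ π m.1 ρ m.2) '' M₁) -
        sInf ((fun m : Model S A => ret γ π m.1 ρ m.2) '' M₂)| ≤
      L_r / (1 - γ) + γ * L_P / (1 - γ) ^ 2 := by
  set F : Model S A → ℝ := fun m => ret γ π m.1 ρ m.2
  have hbdd : ∀ M ⊆ M₁ ∪ M₂, BddBelow (F '' M) := fun M hM =>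
    ⟨0, Set.forall_mem_image.2 fun m hm => ret_nonneg hγ0 π m.1 ρ (hrew m (hM hm))⟩
  have hclose : ∀ m₁ ∈ M₁, ∀ m₂ ∈ M₂,
      (∀ s a, ∑ s', |((m₁.1 s a) s').toReal - ((m₂.1 s a) s').toReal| ≤ L_P) →
      (∀ s a, |m₁.2 (s, a) - m₂.2 (s, a)| ≤ L_r) →
      |F m₁ - F m₂| ≤ L_r / (1 - γ) + γ * L_P / (1 - γ) ^ 2 :=
    fun m₁ hm₁ m₂ hm₂ hK hr => abs_ret_sub_le hγ0 hγ1 π ρ (hrew m₁ (Or.inl hm₁))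
      (hrew m₂ (Or.inr hm₂)) hK hr
  rw [abs_sub_le_iff, sub_le_iff_le_add', sub_le_iff_le_add']
  constructor
  · refine csInf_image_le_csInf_image_add (hbdd M₁ Set.subset_union_left) hM₂ fun m₂ hm₂ => ?_
    obtain ⟨m₁, hm₁, hK, hr⟩ := h21 m₂ hm₂
    exact ⟨m₁, hm₁, by linarith [(abs_le.1 (hclose m₁ hm₁ m₂ hm₂ hK hr)).2]⟩
  · refine csInf_image_le_csInf_image_add (hbdd M₂ Set.subset_union_right) hM₁ fun m₁ hm₁ => ?_
    obtain ⟨m₂, hm₂, hK, hr⟩ := h12 m₁ hm₁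
    exact ⟨m₂, hm₂, by linarith [(abs_le.1 (hclose m₁ hm₁ m₂ hm₂ hK hr)).1]⟩

/-- If two nonempty uncertainty sets of models (with `[0,1]`-valued
rewards) are mutually within `(L_P, L_r)` (kernel ℓ₁ / reward sup distance), then their
robust objectives `inf_{m ∈ M} J(π, m)` differ by at most `L_r/(1-γ) + γ L_P/(1-γ)²`. -/
theorem robust_obj_abs_sub_le {S A : Type*} [Fintype S] [Fintype A] [Nonempty S] [Nonempty A]
    (γ : ℝ) (hγ0 : 0 ≤ γ) (hγ1 : γ < 1)
    (π : S → PMF A) (ρ : PMF S)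
    (M₁ M₂ : Set (Model S A)) (hM₁ : M₁.Nonempty) (hM₂ : M₂.Nonempty)
    (hrew : ∀ m ∈ M₁ ∪ M₂, ∀ x, m.2 x ∈ Set.Icc (0 : ℝ) 1)
    (L_P L_r : ℝ) (hLP : 0 ≤ L_P) (hLr : 0 ≤ L_r)
    (h12 : ∀ m₁ ∈ M₁, ∃ m₂ ∈ M₂,
      (∀ s : S, ∀ a : A, ∑ s' : S, |((m₁.1 s a) s').toReal - ((m₂.1 s a) s').toReal| ≤ L_P) ∧
      ∀ s : S, ∀ a : A, |m₁.2 (s, a) - m₂.2 (s, a)| ≤ L_r)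
    (h21 : ∀ m₂ ∈ M₂, ∃ m₁ ∈ M₁,
      (∀ s : S, ∀ a : A, ∑ s' : S, |((m₁.1 s a) s').toReal - ((m₂.1 s a) s').toReal| ≤ L_P) ∧
      ∀ s : S, ∀ a : A, |m₁.2 (s, a) - m₂.2 (s, a)| ≤ L_r) :
    |sInf ((fun m : Model S A => ret γ π m.1 ρ m.2) '' M₁) -
        sInf ((fun m : Model S A => ret γ π m.1 ρ m.2) '' M₂)| ≤
      L_r / (1 - γ) + γ * L_P / (1 - γ) ^ 2 :=
  robust_obj_abs_sub_le_general γ hγ0 hγ1 π ρ M₁ M₂ hM₁ hM₂ hrew L_P L_r h12 h21
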